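/- Let K be a complete discretely valued field (of characteristic 0 or p) with perfect residue field of characteristic p, and let L/K be a finite, totally ramified, Galois extension of degree p^n. Let π_L be a uniformizer of L with minimal polynomial p(x) over K, and set d = v_L(p'(π_L)). If ρ ∈ L satisfies v_L(ρ) ≡ −d − 1 (mod p^n), then the set {ρ} ∪ {π_L^i / p'(π_L) : i = 0, …, p^n − 2} is a K-basis of L; in particular L = K·ρ + Σ_{i=0}^{p^n−2} K·(π_L^i / p'(π_L)). -/

import Mathlib

/-!
The proposed vectors have valuations in pairwise distinct classes modulo `p ^ n`, the
ramification index: `v(πL^i / D) = i - v(D)`, and `ρ` takes the class `p ^ n - 1 - v(D)`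
left free by `i ≤ p ^ n - 2`. Multiplying by a scalar of `K` moves a valuation by a multiple of `p ^ n`, so in
a nontrivial `K`-combination the nonzero terms have distinct valuations, the ultrametric
inequality is an equality and the sum cannot vanish. Being `p ^ n = [L : K]` independent
vectors, they form a basis.
-/

/-- A normalized discrete valuation on a field `F` : an integer-valued function
(its value at `0` is irrelevant), additive on products of nonzero elements,
satisfying the ultrametric inequality, and attaining the value `1`
(so `v (Fˣ) = ℤ`, i.e. it is normalized). -/
structure NormDiscVal (F : Type*) [Field F] where
  v : F → ℤ
  v_mul : ∀ x y : F, x ≠ 0 → y ≠ 0 → v (x * y) = v x + v y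
  v_add : ∀ x y : F, x ≠ 0 → y ≠ 0 → x + y ≠ 0 → min (v x) (v y) ≤ v (x + y)
  exists_uniformizer : ∃ π : F, π ≠ 0 ∧ v π = 1

namespace NormDiscVal

variable {F : Type*} [Field F]

/-- `x` belongs to the fractional ideal `𝔓^j = {x | v x ≥ j}` (and `0` belongs to all). -/
def memP (w : NormDiscVal F) (j : ℤ) (x : F) : Prop := x = 0 ∨ j ≤ w.v x

/-- `F` is complete with respect to the valuation `w` :
every Cauchy sequence (for the valuation) has a limit. -/
def IsComplete (w : NormDiscVal F) : Prop :=
  ∀ a : ℕ → F,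
    (∀ N : ℤ, ∃ M : ℕ, ∀ m k : ℕ, M ≤ m → M ≤ k → w.memP N (a m - a k)) →
    ∃ l : F, ∀ N : ℤ, ∃ M : ℕ, ∀ m : ℕ, M ≤ m → w.memP N (a m - l)

/-- The residue field of `w` has characteristic `p` and is perfect :
`p` vanishes in the residue field and the Frobenius is surjective on it. -/
def PerfectResidueCharP (w : NormDiscVal F) (p : ℕ) : Prop :=
  w.memP 1 (p : F) ∧
    ∀ x : F, w.memP 0 x → ∃ y : F, w.memP 0 y ∧ w.memP 1 (x - y ^ p)

variable (w : NormDiscVal F)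

lemma v_one : w.v 1 = 0 := by
  have := w.v_mul 1 1 one_ne_zero one_ne_zero
  rw [mul_one] at this
  omega

lemma v_neg {x : F} (hx : x ≠ 0) : w.v (-x) = w.v x := by
  have h1 : w.v (-1) = 0 := by
    have := w.v_mul (-1) (-1) (by norm_num) (by norm_num)
    rw [neg_one_mul, neg_neg, v_one] at this
    omega
  rw [← neg_one_mul, w.v_mul _ _ (by norm_num) hx, h1, zero_add]

lemma v_div {x y : F} (hx : x ≠ 0) (hy : y ≠ 0) : w.v (x / y) = w.v x - w.v y := by
  have := w.v_mul (x / y) y (div_ne_zero hx hy) hy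
  rw [div_mul_cancel₀ x hy] at this
  omega

lemma v_pow {x : F} (hx : x ≠ 0) (k : ℕ) : w.v (x ^ k) = k * w.v x := by
  induction k with
  | zero => simpa using w.v_one
  | succ k ih =>
    rw [pow_succ, w.v_mul _ _ (pow_ne_zero _ hx) hx, ih]
    push_cast
    ring

lemma add_ne_zero_of_v_ne {x y : F} (hx : x ≠ 0) (hne : w.v x ≠ w.v y) : x + y ≠ 0 := by
  intro h
  rw [eq_neg_of_add_eq_zero_right h, w.v_neg hx] at hne
  exact hne rfl

lemma v_add_eq_left_of_lt {x y : F} (hx : x ≠ 0) (hy : y ≠ 0) (hlt : w.v x < w.v y) :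
    w.v (x + y) = w.v x := by
  have hxy := w.add_ne_zero_of_v_ne hx hlt.ne
  have h1 := w.v_add x y hx hy hxy
  have h2 := w.v_add (x + y) (-y) hxy (neg_ne_zero.2 hy) (by rwa [add_neg_cancel_right])
  rw [add_neg_cancel_right, w.v_neg hy] at h2
  omega

lemma sum_ne_zero_and_exists_v_sum_eq {ι : Type*} {s : Finset ι} (hs : s.Nonempty)
    (f : ι → F) (hf : ∀ i ∈ s, f i ≠ 0) (hinj : Set.InjOn (w.v ∘ f) s) :
    ∑ i ∈ s, f i ≠ 0 ∧ ∃ i ∈ s, w.v (∑ i ∈ s, f i) = w.v (f i) := by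
  induction hs using Finset.Nonempty.cons_induction with
  | singleton a => simpa using hf a
  | cons a s ha hs ih =>
    obtain ⟨hsum, i, hi, hvi⟩ := ih (fun j hj => hf j (Finset.mem_cons_of_mem hj))
      (hinj.mono fun j hj => Finset.mem_cons_of_mem hj)
    have hfa := hf a (Finset.mem_cons_self a s)
    have hne : w.v (f a) ≠ w.v (∑ j ∈ s, f j) := by
      rw [hvi]
      intro h
      exact ha (hinj (Finset.mem_cons_self a s) (Finset.mem_cons_of_mem hi) h ▸ hi)
    rw [Finset.sum_cons]
    refine ⟨w.add_ne_zero_of_v_ne hfa hne, ?_⟩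
    rcases hne.lt_or_gt with hlt | hlt
    · exact ⟨a, Finset.mem_cons_self a s, w.v_add_eq_left_of_lt hfa hsum hlt⟩
    · rw [add_comm, w.v_add_eq_left_of_lt hsum hfa hlt]
      exact ⟨i, Finset.mem_cons_of_mem hi, hvi⟩

end NormDiscVal

section Ramified

variable {K L : Type*} [Field K] [Field L] [Algebra K L] (vK : NormDiscVal K) (vL : NormDiscVal L)
  {e : ℤ} (hram : ∀ c : K, c ≠ 0 → vL.v (algebraMap K L c) = e * vK.v c)
include hram

lemma NormDiscVal.v_smul_of_ramification {c : K} {x : L} (hc : c ≠ 0) (hx : x ≠ 0) :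
    vL.v (c • x) = e * vK.v c + vL.v x := by
  rw [Algebra.smul_def, vL.v_mul _ _ ((map_ne_zero _).2 hc) hx, hram c hc]

theorem NormDiscVal.linearIndependent_of_v_injective_modEq {ι : Type*} [Fintype ι] {x : ι → L}
    (hx : ∀ i, x i ≠ 0) (hinj : ∀ i j, vL.v (x i) ≡ vL.v (x j) [ZMOD e] → i = j) :
    LinearIndependent K x := by
  classical
  rw [Fintype.linearIndependent_iff]
  intro c hc
  by_contra! ⟨i, hi⟩
  set s := Finset.univ.filter (c · ≠ 0)
  have hterm : ∀ j ∈ s, c j • x j ≠ 0 := fun j hj =>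
    smul_ne_zero (Finset.mem_filter.1 hj).2 (hx j)
  have hval : ∀ j ∈ s, vL.v (c j • x j) = e * vK.v (c j) + vL.v (x j) := fun j hj =>
    NormDiscVal.v_smul_of_ramification vK vL hram (Finset.mem_filter.1 hj).2 (hx j)
  have hinjOn : Set.InjOn (vL.v ∘ fun j => c j • x j) s := by
    intro j hj k hk hjk
    simp only [Function.comp_apply, hval j hj, hval k hk] at hjk
    exact hinj j k (Int.modEq_iff_dvd.2 ⟨vK.v (c j) - vK.v (c k), by linarith⟩)
  have hs : s.Nonempty := ⟨i, Finset.mem_filter.2 ⟨Finset.mem_univ i, hi⟩⟩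
  refine (vL.sum_ne_zero_and_exists_v_sum_eq hs _ hterm hinjOn).1 ?_
  rw [← hc]
  exact Finset.sum_filter_of_ne fun j _ hj hcj => hj (by rw [hcj, zero_smul])

end Ramified

lemma Fin.eq_of_intCast_modEq {m : ℕ} {i j : Fin m} (h : (i : ℤ) ≡ j [ZMOD m]) : i = j :=
  Fin.ext <| (Int.natCast_modEq_iff.1 h).eq_of_lt_of_lt i.isLt j.isLt

open Polynomial

theorem alternate_basis_of_critical_valuation_general
    {p : ℕ} {K L : Type*} [Field K] [Field L] [Algebra K L]
    (vK : NormDiscVal K)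
    [FiniteDimensional K L] [IsGalois K L]
    (n : ℕ) (hdeg : Module.finrank K L = p ^ n)
    (vL : NormDiscVal L)
    (htotram : ∀ x : K, x ≠ 0 → vL.v (algebraMap K L x) = (p ^ n : ℤ) * vK.v x)
    (πL : L) (hπL : πL ≠ 0 ∧ vL.v πL = 1)
    (D : L) (hD : D = aeval πL (derivative (minpoly K πL)))
    (ρ : L) (hρ : ρ ≠ 0)
    (hval : Int.ModEq ((p : ℤ) ^ n) (vL.v ρ) (-vL.v D - 1)) :
    LinearIndependent K
        (fun j : Fin (p ^ n) => if (j : ℕ) = p ^ n - 1 then ρ else πL ^ (j : ℕ) / D) ∧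
      Submodule.span K
        (Set.range fun j : Fin (p ^ n) =>
          if (j : ℕ) = p ^ n - 1 then ρ else πL ^ (j : ℕ) / D) = ⊤ := by
  obtain ⟨hπ, hvπ⟩ := hπL
  have hD0 : D ≠ 0 := hD ▸
    (Algebra.IsSeparable.isSeparable K πL).aeval_derivative_ne_zero (minpoly.aeval K πL)
  have hpos : 0 < p ^ n := hdeg ▸ Module.finrank_pos
  set f : Fin (p ^ n) → L := fun j => if (j : ℕ) = p ^ n - 1 then ρ else πL ^ (j : ℕ) / D
  have hf : ∀ j, f j ≠ 0 ∧ vL.v (f j) ≡ j - vL.v D [ZMOD (p : ℤ) ^ n] := by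
    intro j
    by_cases hj : (j : ℕ) = p ^ n - 1
    · simp only [f, if_pos hj]
      refine ⟨hρ, hval.trans (Int.modEq_iff_dvd.2 ⟨1, ?_⟩)⟩
      rw [hj, Nat.cast_sub hpos]
      push_cast
      ring
    · simp only [f, if_neg hj]
      refine ⟨div_ne_zero (pow_ne_zero _ hπ) hD0, ?_⟩
      rw [vL.v_div (pow_ne_zero _ hπ) hD0, vL.v_pow hπ, hvπ, mul_one]
  have hli : LinearIndependent K f :=
    NormDiscVal.linearIndependent_of_v_injective_modEq vK vL htotram (fun j => (hf j).1)
      fun i j hij => Fin.eq_of_intCast_modEq <| by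
        simpa using (((hf i).2.symm.trans hij).trans (hf j).2).add_right (vL.v D)
  exact ⟨hli, hli.span_eq_top_of_card_eq_finrank' (by simp [hdeg])⟩

/-- **An adapted field basis.**  Let `K` be a complete discretely valued field
(characteristic `0` or `p`) with perfect residue field of characteristic `p`,
and `L/K` a finite, totally ramified, Galois extension of degree `p ^ n`.
With `d = v_L(p'(πL))`, if `v_L(ρ) ≡ −d − 1 (mod p ^ n)` then the family
`{ρ} ∪ {πL^i / p'(πL) : 0 ≤ i ≤ p^n − 2}` is a `K`-basis of `L`; in
particular `L = K·ρ + ∑_{i=0}^{p^n−2} K · πL^i / p'(πL)`. -/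
theorem alternate_basis_of_critical_valuation
    {p : ℕ} (hp : p.Prime) {K L : Type*} [Field K] [Field L] [Algebra K L]
    (hchar : ringChar K = 0 ∨ ringChar K = p)
    (vK : NormDiscVal K) (hKcompl : vK.IsComplete)
    (hKres : vK.PerfectResidueCharP p)
    [FiniteDimensional K L] [IsGalois K L]
    (n : ℕ) (hdeg : Module.finrank K L = p ^ n)
    (vL : NormDiscVal L)
    (htotram : ∀ x : K, x ≠ 0 → vL.v (algebraMap K L x) = (p ^ n : ℤ) * vK.v x)
    (πL : L) (hπL : πL ≠ 0 ∧ vL.v πL = 1)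
    (D : L) (hD : D = aeval πL (derivative (minpoly K πL)))
    (ρ : L) (hρ : ρ ≠ 0)
    (hval : Int.ModEq ((p : ℤ) ^ n) (vL.v ρ) (-vL.v D - 1)) :
    LinearIndependent K
        (fun j : Fin (p ^ n) => if (j : ℕ) = p ^ n - 1 then ρ else πL ^ (j : ℕ) / D) ∧
      Submodule.span K
        (Set.range fun j : Fin (p ^ n) =>
          if (j : ℕ) = p ^ n - 1 then ρ else πL ^ (j : ℕ) / D) = ⊤ :=
  alternate_basis_of_critical_valuation_general vK n hdeg vL htotram πL hπL D hD ρ hρ hval
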